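/- Let a, b ∈ ℂ with positive real parts and x ∈ ℝ. Then the continuous Hahn polynomial admits the representation p_n(x; a, b, ā, b̄) = iⁿ Σ_{k=0}^n (−1)^k (a+ix)_k (b+ix)_k (ā−ix)_{n−k} (b̄−ix)_{n−k} / (k! (n−k)!). -/

import Mathlib

open Complex Finset

/-- The Pochhammer symbol (rising factorial) `(z)_n = z(z+1)⋯(z+n-1)`. -/
noncomputable def poch (z : ℂ) (n : ℕ) : ℂ := ∏ i ∈ Finset.range n, (z + i)

/-- The continuous Hahn polynomial `p_n(x; a, b, ā, b̄)` via its terminating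
`₃F₂` representation. -/
noncomputable def cHahn (n : ℕ) (x : ℝ) (a b : ℂ) : ℂ :=
  Complex.I ^ n * poch ((2 * a.re : ℝ) : ℂ) n * poch (a + (starRingEnd ℂ) b) n /
      (n.factorial : ℂ) *
    ∑ j ∈ Finset.range (n + 1),
      poch (-(n : ℂ)) j * poch ((n : ℂ) + 2 * a.re + 2 * b.re - 1) j *
          poch (a + Complex.I * x) j /
        (poch ((2 * a.re : ℝ) : ℂ) j * poch (a + (starRingEnd ℂ) b) j * j.factorial)

/-!
Put `α = a + ix`, `β = ā - ix`, `γ = b + ix`, `δ = b̄ - ix`. The `₃F₂` has numerator parameters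
`-n, n + α + β + γ + δ - 1, α` and denominator parameters `α + β = 2 Re a`, `α + δ = a + b̄`, whose
Pochhammer symbols do not vanish since `Re a, Re b > 0`. Clearing denominators, the claim becomes
an identity for `S(u, c; v, w) = ∑ⱼ (-1)ʲ C(n, j) (u)ⱼ (c)ⱼ (v + j)ₙ₋ⱼ (w + j)ₙ₋ⱼ`. Expanding `(c)ⱼ`
by Chu–Vandermonde and resumming with Chu–Vandermonde again gives the transformation
`S(u, c; v, w) = (-1)ⁿ S(u, v - c; v, 1 - n + u - w)`. Two applications carry
`(α, n + α + β + γ + δ - 1; α + β, α + δ)` to `(α, γ; 1 - n - β, 1 - n - δ)`, and the reflection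
`(z)ₘ = (-1)ᵐ (1 - m - z)ₘ` turns that into the stated sum.
-/

open ComplexConjugate

lemma poch_eq_eval (z : ℂ) (n : ℕ) : poch z n = (ascPochhammer ℂ n).eval z := by
  induction n with
  | zero => simp [poch]
  | succ n ih => rw [poch, prod_range_succ, ← poch, ih, ascPochhammer_succ_eval]

lemma poch_eq_smeval_descPochhammer (z : ℂ) (n : ℕ) :
    poch z n = (descPochhammer ℤ n).smeval (z + n - 1) := by
  rw [Polynomial.descPochhammer_smeval_eq_ascPochhammer,
    Polynomial.ascPochhammer_smeval_eq_eval, poch_eq_eval]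
  ring_nf

lemma neg_one_pow_mul_poch (z : ℂ) (n : ℕ) :
    (-1) ^ n * poch z n = (descPochhammer ℤ n).smeval (-z) := by
  have h := Polynomial.ascPochhammer_smeval_neg_eq_descPochhammer (-z) n
  rw [neg_neg, Polynomial.ascPochhammer_smeval_eq_eval, ← poch_eq_eval, Units.smul_def,
    Int.coe_negOnePow_natCast, zsmul_eq_mul] at h
  rw [h]
  push_cast
  rw [← mul_assoc, ← mul_pow]
  norm_num

lemma poch_sub_eq_sum (B C : ℂ) (J : ℕ) :
    poch (C - B) J = ∑ l ∈ range (J + 1),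
      (-1) ^ l * J.choose l * poch B l * poch (C + l) (J - l) := by
  have h := Ring.descPochhammer_smeval_add J (Commute.all (-B) (C + J - 1))
  rw [Nat.sum_antidiagonal_eq_sum_range_succ_mk] at h
  rw [poch_eq_smeval_descPochhammer, show C - B + J - 1 = -B + (C + J - 1) by ring, h]
  refine Finset.sum_congr rfl fun l hl => ?_
  rw [← neg_one_pow_mul_poch, poch_eq_smeval_descPochhammer (C + l),
    Nat.cast_sub (mem_range_succ_iff.mp hl)]
  ring_nf

lemma poch_reflect (z : ℂ) (m : ℕ) : poch (1 - m - z) m = (-1) ^ m * poch z m := by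
  rw [neg_one_pow_mul_poch, poch_eq_smeval_descPochhammer]
  ring_nf

lemma poch_one_sub_add {n k : ℕ} (hk : k ≤ n) (z : ℂ) :
    poch (1 - n - z + k) (n - k) = (-1) ^ (n - k) * poch z (n - k) := by
  rw [← poch_reflect, Nat.cast_sub hk]
  ring_nf

lemma poch_neg_natCast (n j : ℕ) :
    poch (-(n : ℂ)) j = (-1) ^ j * n.choose j * j.factorial := by
  have h := neg_one_pow_mul_poch (-(n : ℂ)) j
  rw [neg_neg, Polynomial.descPochhammer_smeval_eq_descFactorial,
    Nat.descFactorial_eq_factorial_mul_choose] at h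
  calc poch (-(n : ℂ)) j = (-1) ^ j * ((-1) ^ j * poch (-(n : ℂ)) j) := by
        rw [← mul_assoc, ← mul_pow]; norm_num
    _ = _ := by rw [h]; push_cast; ring

lemma poch_add (z : ℂ) (m k : ℕ) : poch z (m + k) = poch z m * poch (z + m) k := by
  simp only [poch, prod_range_add, Nat.cast_add, add_assoc]

lemma poch_ne_zero_of_le {z : ℂ} {n j : ℕ} (h : poch z n ≠ 0) (hj : j ≤ n) : poch z j ≠ 0 := by
  rw [← Nat.add_sub_cancel' hj, poch_add] at h
  exact left_ne_zero_of_mul h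

lemma poch_ne_zero_of_re_pos {z : ℂ} (hz : 0 < z.re) (n : ℕ) : poch z n ≠ 0 :=
  prod_ne_zero_iff.mpr fun i _ h => by
    have := congrArg re h
    simp only [add_re, natCast_re, zero_re] at this
    linarith [(Nat.cast_nonneg i : (0 : ℝ) ≤ i)]

/-- `pochSum n u c v w = (v)ₙ (w)ₙ ₃F₂(-n, u, c; v, w; 1)` whenever `(v)ₙ (w)ₙ ≠ 0`. -/
noncomputable def pochSum (n : ℕ) (u c v w : ℂ) : ℂ :=
  ∑ j ∈ range (n + 1),
    (-1) ^ j * n.choose j * poch u j * poch c j * poch (v + j) (n - j) * poch (w + j) (n - j)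

lemma pochSum_comm (n : ℕ) (u c v w : ℂ) : pochSum n u c v w = pochSum n u c w v := by
  simp only [pochSum, mul_right_comm _ (poch (v + _) _)]

lemma pochSum_eq_sum_sum (n : ℕ) (u c v w : ℂ) :
    pochSum n u c v w = ∑ m ∈ range (n + 1),
      n.choose m * poch u m * poch (v - c) m * poch (v + m) (n - m) *
        ∑ l ∈ range (n - m + 1),
          (-1) ^ l * (n - m).choose l * poch (u + m) l * poch (w + m + l) (n - m - l) := by
  have expand (j : ℕ) : poch c j = ∑ m ∈ range (j + 1),
      (-1 : ℂ) ^ m * j.choose m * poch (v - c) m * poch (v + m) (j - m) := by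
    simpa using poch_sub_eq_sum (v - c) v j
  set G : ℕ → ℕ → ℂ := fun m l =>
    n.choose m * poch u m * poch (v - c) m * poch (v + m) (n - m) *
      ((-1) ^ l * (n - m).choose l * poch (u + m) l * poch (w + m + l) (n - m - l)) with hG
  have hterm {m l : ℕ} (hml : m + l ≤ n) :
      (-1) ^ (m + l) * n.choose (m + l) * poch u (m + l) *
        ((-1) ^ m * (m + l).choose m * poch (v - c) m * poch (v + m) l) *
        poch (v + (m + l : ℕ)) (n - (m + l)) * poch (w + (m + l : ℕ)) (n - (m + l)) = G m l := by
    have hsign : (-1 : ℂ) ^ (m + l) * (-1) ^ m = (-1) ^ l := by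
      rw [pow_add, mul_right_comm, ← pow_add, ← two_mul, pow_mul]; norm_num
    have hchoose : (n.choose (m + l) : ℂ) * (m + l).choose m = n.choose m * (n - m).choose l := by
      have := Nat.choose_mul (n := n) (Nat.le_add_right m l)
      rw [Nat.add_sub_cancel_left] at this
      exact_mod_cast this
    have hv : poch (v + m) (n - m) = poch (v + m) l * poch (v + m + l) (n - m - l) := by
      rw [← poch_add]
      congr 1
      omega
    simp only [hG]
    rw [hv, poch_add u m l, Nat.sub_sub]
    push_cast
    rw [← add_assoc, ← add_assoc]
    calc _ = ((-1) ^ (m + l) * (-1) ^ m) * ((n.choose (m + l) : ℂ) * (m + l).choose m) *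
          (poch u m * poch (u + m) l * poch (v - c) m * poch (v + m) l *
            poch (v + m + l) (n - (m + l)) * poch (w + m + l) (n - (m + l))) := by ring
      _ = _ := by rw [hsign, hchoose]; ring
  calc pochSum n u c v w = ∑ j ∈ range (n + 1), ∑ m ∈ range (j + 1), G m (j - m) := by
        unfold pochSum
        refine Finset.sum_congr rfl fun j hj => ?_
        rw [expand, mul_sum, sum_mul, sum_mul]
        refine Finset.sum_congr rfl fun m hm => ?_
        obtain ⟨l, rfl⟩ := Nat.exists_eq_add_of_le (mem_range_succ_iff.mp hm)
        rw [Nat.add_sub_cancel_left, ← hterm (mem_range_succ_iff.mp hj)]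
    _ = ∑ m ∈ range (n + 1), ∑ l ∈ range (n + 1 - m), G m l := sum_range_diag_flip (n + 1) G
    _ = _ := Finset.sum_congr rfl fun m hm => by
        rw [Nat.sub_add_comm (mem_range_succ_iff.mp hm), mul_sum]

lemma pochSum_eq_sum_poch_sub (n : ℕ) (u c v w : ℂ) :
    pochSum n u c v w = ∑ m ∈ range (n + 1),
      n.choose m * poch u m * poch (v - c) m * poch (v + m) (n - m) * poch (w - u) (n - m) := by
  rw [pochSum_eq_sum_sum]
  refine Finset.sum_congr rfl fun m _ => ?_
  rw [← add_sub_add_right_eq_sub w u (m : ℂ), poch_sub_eq_sum (u + m) (w + m) (n - m)]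

lemma pochSum_eq_neg_one_pow_mul (n : ℕ) (u c v w : ℂ) :
    pochSum n u c v w = (-1) ^ n * pochSum n u (v - c) v (1 - n + u - w) := by
  rw [pochSum_eq_sum_poch_sub, pochSum, mul_sum]
  refine Finset.sum_congr rfl fun m hm => ?_
  have hm := mem_range_succ_iff.mp hm
  have hsign : (-1 : ℂ) ^ n * ((-1) ^ m * (-1) ^ (n - m)) = 1 := by
    rw [← pow_add, Nat.add_sub_cancel' hm, ← mul_pow]; norm_num
  rw [show 1 - n + u - w + m = 1 - n - (w - u) + m by ring, poch_one_sub_add hm]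
  linear_combination -(n.choose m * poch u m * poch (v - c) m * poch (v + m) (n - m) *
    poch (w - u) (n - m)) * hsign

lemma pochSum_one_sub (n : ℕ) (u c β δ : ℂ) :
    pochSum n u c (1 - n - β) (1 - n - δ) = ∑ k ∈ range (n + 1),
      (-1) ^ k * n.choose k * poch u k * poch c k * poch β (n - k) * poch δ (n - k) := by
  refine Finset.sum_congr rfl fun k hk => ?_
  have hk := mem_range_succ_iff.mp hk
  have hsign : (-1 : ℂ) ^ (n - k) * (-1) ^ (n - k) = 1 := by rw [← mul_pow]; norm_num
  rw [poch_one_sub_add hk, poch_one_sub_add hk]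
  linear_combination (-1) ^ k * n.choose k * poch u k * poch c k * poch β (n - k) *
    poch δ (n - k) * hsign

lemma pochSum_eq_convolution (n : ℕ) (α β γ δ : ℂ) :
    pochSum n α (n + (α + β + γ + δ) - 1) (α + β) (α + δ) = ∑ k ∈ range (n + 1),
      (-1) ^ k * n.choose k * poch α k * poch γ k * poch β (n - k) * poch δ (n - k) := by
  calc pochSum n α (n + (α + β + γ + δ) - 1) (α + β) (α + δ)
      = (-1) ^ n * pochSum n α (1 - n - γ - δ) (1 - n - δ) (α + β) := by
        rw [pochSum_eq_neg_one_pow_mul, pochSum_comm]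
        congr 2 <;> ring
    _ = pochSum n α γ (1 - n - β) (1 - n - δ) := by
        rw [pochSum_eq_neg_one_pow_mul, ← mul_assoc, ← mul_pow, pochSum_comm]
        norm_num
        congr 1
        ring
    _ = _ := pochSum_one_sub n α γ β δ

lemma mul_sum_eq_pochSum_div (n : ℕ) (u c p q : ℂ) (hp : poch p n ≠ 0) (hq : poch q n ≠ 0) :
    poch p n * poch q n / n.factorial * ∑ j ∈ range (n + 1),
      poch (-(n : ℂ)) j * poch c j * poch u j / (poch p j * poch q j * j.factorial) =
      pochSum n u c p q / n.factorial := by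
  rw [mul_sum, pochSum, sum_div]
  refine Finset.sum_congr rfl fun j hj => ?_
  have hj := mem_range_succ_iff.mp hj
  have hpj := poch_ne_zero_of_le hp hj
  have hqj := poch_ne_zero_of_le hq hj
  have hj! : (j.factorial : ℂ) ≠ 0 := by exact_mod_cast j.factorial_ne_zero
  have hn! : (n.factorial : ℂ) ≠ 0 := by exact_mod_cast n.factorial_ne_zero
  rw [← Nat.add_sub_cancel' hj, poch_add p, poch_add q, Nat.add_sub_cancel' hj, poch_neg_natCast]
  field_simp

lemma choose_mul_div_factorial {n k : ℕ} (hk : k ≤ n) (z : ℂ) :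
    n.choose k * z / n.factorial = z / (k.factorial * (n - k).factorial) := by
  have hn! : (n.factorial : ℂ) ≠ 0 := by exact_mod_cast n.factorial_ne_zero
  rw [Nat.cast_choose ℂ hk]
  field_simp

theorem hypergeometric_eq_convolution (n : ℕ) (α β γ δ : ℂ)
    (hαβ : poch (α + β) n ≠ 0) (hαδ : poch (α + δ) n ≠ 0) :
    poch (α + β) n * poch (α + δ) n / n.factorial * ∑ j ∈ range (n + 1),
      poch (-(n : ℂ)) j * poch (n + (α + β + γ + δ) - 1) j * poch α j /
        (poch (α + β) j * poch (α + δ) j * j.factorial) =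
      ∑ k ∈ range (n + 1), (-1) ^ k * poch α k * poch γ k * poch β (n - k) * poch δ (n - k) /
        (k.factorial * (n - k).factorial) := by
  rw [mul_sum_eq_pochSum_div n _ _ _ _ hαβ hαδ, pochSum_eq_convolution, sum_div]
  refine Finset.sum_congr rfl fun k hk => ?_
  rw [← choose_mul_div_factorial (mem_range_succ_iff.mp hk)]
  ring_nf

theorem cHahn_representation (a b : ℂ) (ha : 0 < a.re) (hb : 0 < b.re) (x : ℝ) (n : ℕ) :
    cHahn n x a b =
      Complex.I ^ n *
        ∑ k ∈ Finset.range (n + 1),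
          (-1 : ℂ) ^ k * poch (a + Complex.I * x) k * poch (b + Complex.I * x) k *
              poch ((starRingEnd ℂ) a - Complex.I * x) (n - k) *
              poch ((starRingEnd ℂ) b - Complex.I * x) (n - k) /
            ((k.factorial : ℂ) * ((n - k).factorial : ℂ)) := by
  have hαβ : ((2 * a.re : ℝ) : ℂ) = (a + I * x) + (conj a - I * x) := by
    rw [← add_conj]; ring
  have hαδ : a + conj b = (a + I * x) + (conj b - I * x) := by ring
  have hsum : (n : ℂ) + 2 * a.re + 2 * b.re - 1 =
      n + ((a + I * x) + (conj a - I * x) + (b + I * x) + (conj b - I * x)) - 1 := by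
    simp only [← ofReal_ofNat, ← ofReal_mul, ← add_conj]
    ring
  have hαβ_ne : poch ((a + I * x) + (conj a - I * x)) n ≠ 0 :=
    hαβ ▸ poch_ne_zero_of_re_pos (by simpa using ha) n
  have hαδ_ne : poch ((a + I * x) + (conj b - I * x)) n ≠ 0 :=
    hαδ ▸ poch_ne_zero_of_re_pos (by simp only [add_re, conj_re]; linarith) n
  rw [cHahn, hαβ, hαδ, hsum, mul_assoc, mul_div_assoc, mul_assoc]
  exact congrArg (I ^ n * ·) (hypergeometric_eq_convolution n _ _ _ _ hαβ_ne hαδ_ne)
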